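/- arXiv:1611.04807 — 4 statements merged into one kernel-verified Lean document; each statement's English description precedes it below -/
import Mathlib

section
/- With the setup of the Lyapunov–Schmidt reduction, the implicit function β̄(α,ε) solving π^⊥ g(α, β̄(α,ε), ε) = 0 satisfies (∂β̄/∂ε)(α,0) = γ₁(α) where γ₁(α) = -Δ_α^{-1} π^⊥ g₁(z_α). -/
/-! Differentiating `π^⊥ g(α, β̄(ε), ε) = 0` at `ε = 0` by the chain rule gives
`Δ_α β̄'(0) + π^⊥ g₁(z_α) = 0`, the two terms being the partial derivatives in `b` and in `ε`;
applying `Δ_α⁻¹` yields `β̄'(0) = γ₁(α)`. -/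

open Set Filter Topology

section ImplicitCurve

variable {𝕜 E F : Type*} [NontriviallyNormedField 𝕜]
  [NormedAddCommGroup E] [NormedSpace 𝕜 E] [NormedAddCommGroup F] [NormedSpace 𝕜 F]
  {f : E × 𝕜 → F} {x : E} {t₀ : 𝕜}

theorem HasFDerivAt.hasFDerivAt_partial_fst {D : E × 𝕜 →L[𝕜] F} (hf : HasFDerivAt f D (x, t₀)) :
    HasFDerivAt (fun y => f (y, t₀)) (D.comp (.inl 𝕜 E 𝕜)) x :=
  hf.comp x (hasFDerivAt_prodMk_left x t₀)

theorem HasFDerivAt.hasDerivAt_partial_snd {D : E × 𝕜 →L[𝕜] F} (hf : HasFDerivAt f D (x, t₀)) :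
    HasDerivAt (fun t => f (x, t)) (D (0, 1)) t₀ :=
  hf.comp_hasDerivAt t₀ ((hasDerivAt_const t₀ x).prodMk (hasDerivAt_id t₀))

theorem partial_fst_apply_deriv_add_partial_snd_eq_zero {Δ : E →L[𝕜] F} {c : 𝕜 → E} {c' : E}
    (hf : DifferentiableAt 𝕜 f (x, t₀)) (hΔ : HasFDerivAt (fun y => f (y, t₀)) Δ x)
    (hc : HasDerivAt c c' t₀) (hc₀ : c t₀ = x) (hzero : ∀ᶠ t in 𝓝 t₀, f (c t, t) = 0) :
    Δ c' + deriv (fun t => f (x, t)) t₀ = 0 := by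
  set D := fderiv 𝕜 f (x, t₀)
  have hD : HasFDerivAt f D (x, t₀) := hf.hasFDerivAt
  have hΔD : Δ = D.comp (.inl 𝕜 E 𝕜) := hΔ.unique hD.hasFDerivAt_partial_fst
  have htotal : HasDerivAt (fun t => f (c t, t)) (D (c', 1)) t₀ := by
    rw [← hc₀] at hD
    exact hD.comp_hasDerivAt (f := fun t => (c t, t)) t₀ (hc.prodMk (hasDerivAt_id t₀))
  have htotal_zero : D (c', 1) = 0 :=
    htotal.unique ((hasDerivAt_const t₀ (0 : F)).congr_of_eventuallyEq hzero)
  calc Δ c' + deriv (fun t => f (x, t)) t₀ = D (c', 0) + D (0, 1) := by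
        rw [hΔD, hD.hasDerivAt_partial_snd.deriv, ContinuousLinearMap.comp_apply,
          ContinuousLinearMap.inl_apply]
    _ = D (c', 1) := by rw [← map_add, Prod.mk_add_mk, add_zero, zero_add]
    _ = 0 := htotal_zero

end ImplicitCurve

theorem implicit_function_first_derivative_general
    (m p k : ℕ)
    (g : ((Fin m → ℝ) × (Fin p → ℝ)) × ℝ → (Fin m → ℝ) × (Fin p → ℝ))
    (α : Fin m → ℝ) (β : Fin p → ℝ)
    (hg : ContDiffAt ℝ (k + 1) g ((α, β), 0))
    (Δ : (Fin p → ℝ) →L[ℝ] (Fin p → ℝ))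
    (hΔ : HasFDerivAt (fun b => (g ((α, b), 0)).2) Δ β)
    (Δinv : (Fin p → ℝ) →L[ℝ] (Fin p → ℝ))
    (hinv2 : ∀ y, Δinv (Δ y) = y)
    (ε₁ : ℝ) (hε₁ : 0 < ε₁)
    (βbar : ℝ → Fin p → ℝ)
    (hbar : ∀ ε ∈ Set.Ioo (-ε₁) ε₁, (g ((α, βbar ε), ε)).2 = 0)
    (hbar0 : βbar 0 = β)
    (hbarC : ContDiffOn ℝ (k + 1) βbar (Set.Ioo (-ε₁) ε₁)) :
    HasDerivAt βbar (-(Δinv (deriv (fun ε => (g ((α, β), ε)).2) 0))) 0 := by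
  have hnhds : Ioo (-ε₁) ε₁ ∈ 𝓝 (0 : ℝ) := Ioo_mem_nhds (neg_neg_iff_pos.mpr hε₁) hε₁
  have hβbar : HasDerivAt βbar (deriv βbar 0) 0 :=
    ((hbarC.contDiffAt hnhds).differentiableAt (by simp)).hasDerivAt
  have hgdiff : DifferentiableAt ℝ g ((α, β), 0) := hg.differentiableAt (by simp)
  have hf : DifferentiableAt ℝ (fun z : (Fin p → ℝ) × ℝ => (g ((α, z.1), z.2)).2) (β, 0) := by
    fun_prop
  have hkey := partial_fst_apply_deriv_add_partial_snd_eq_zero hf hΔ hβbar hbar0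
    (eventually_of_mem hnhds hbar)
  rwa [← hinv2 (deriv βbar 0), eq_neg_of_add_eq_zero_left hkey, map_neg] at hβbar

/-- The implicit function `β̄` of the Lyapunov–Schmidt reduction satisfies
`(∂β̄/∂ε)(α,0) = γ₁(α) = -Δ_α⁻¹ π^⊥ g₁(z_α)`, where
`g₁(z_α) = ∂_ε g(z_α, ε)|_{ε=0}` and `Δ_α = ∂_b π^⊥ g₀ (z_α)`. -/
theorem implicit_function_first_derivative
    (m p k : ℕ) (hk : 1 ≤ k)
    (g : ((Fin m → ℝ) × (Fin p → ℝ)) × ℝ → (Fin m → ℝ) × (Fin p → ℝ))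
    (α : Fin m → ℝ) (β : Fin p → ℝ)
    (hg : ContDiffAt ℝ (k + 1) g ((α, β), 0))
    (hg0 : g ((α, β), 0) = 0)
    (Δ : (Fin p → ℝ) →L[ℝ] (Fin p → ℝ))
    (hΔ : HasFDerivAt (fun b => (g ((α, b), 0)).2) Δ β)
    (Δinv : (Fin p → ℝ) →L[ℝ] (Fin p → ℝ))
    (hinv1 : ∀ y, Δ (Δinv y) = y) (hinv2 : ∀ y, Δinv (Δ y) = y)
    (ε₁ : ℝ) (hε₁ : 0 < ε₁)
    (βbar : ℝ → Fin p → ℝ)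
    (hbar : ∀ ε ∈ Set.Ioo (-ε₁) ε₁, (g ((α, βbar ε), ε)).2 = 0)
    (hbar0 : βbar 0 = β)
    (hbarC : ContDiffOn ℝ (k + 1) βbar (Set.Ioo (-ε₁) ε₁)) :
    HasDerivAt βbar (-(Δinv (deriv (fun ε => (g ((α, β), ε)).2) 0))) 0 :=
  implicit_function_first_derivative_general m p k g α β hg Δ hΔ Δinv hinv2 ε₁ hε₁ βbar hbar hbar0
    hbarC
end

section
/- With the setup of the Lyapunov–Schmidt reduction, the reduced function δ(α,ε) = π g(α, β̄(α,ε), ε) satisfies (∂δ/∂ε)(α,0) = f₁(α), where f₁(α) = π g₁(z_α) + (∂π g₀/∂b)(z_α) γ₁(α) and γ₁(α) = -Δ_α^{-1} π^⊥ g₁(z_α). -/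
open Set Filter Topology

/-!
Differentiating `ε ↦ g((α, β̄ ε), ε)` at `0` by the chain rule gives `∂_ε g + ∂_b g · β̄'(0)`.
Applied to the `π^⊥`-component, which vanishes identically along `β̄`, this forces
`Δ β̄'(0) = -∂_ε π^⊥ g`, i.e. `β̄'(0) = γ₁`; applied to the `π`-component it gives `f₁`.
-/

variable {𝕜 E F G H : Type*} [NontriviallyNormedField 𝕜]
  [NormedAddCommGroup E] [NormedSpace 𝕜 E] [NormedAddCommGroup F] [NormedSpace 𝕜 F]
  [NormedAddCommGroup G] [NormedSpace 𝕜 G] [NormedAddCommGroup H] [NormedSpace 𝕜 H]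

theorem DifferentiableAt.hasDerivAt_comp_graph {g : (E × F) × 𝕜 → G} {a : E} {b : F} {t₀ : 𝕜}
    (hg : DifferentiableAt 𝕜 g ((a, b), t₀)) {c : 𝕜 → F} {v : F} (hc : HasDerivAt c v t₀)
    (hc₀ : c t₀ = b) :
    HasDerivAt (fun t => g ((a, c t), t))
      (deriv (fun t => g ((a, b), t)) t₀ + fderiv 𝕜 (fun y => g ((a, y), t₀)) b v) t₀ := by
  set L := fderiv 𝕜 g ((a, b), t₀)
  have hL : HasFDerivAt g L ((a, b), t₀) := hg.hasFDerivAt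
  have h_graph : HasDerivAt (fun t => g ((a, c t), t)) (L ((0, v), 1)) t₀ :=
    hL.comp_hasDerivAt_of_eq t₀
      (((hasDerivAt_const t₀ a).prodMk hc).prodMk (hasDerivAt_id t₀)) (by rw [hc₀])
  have h_t : deriv (fun t => g ((a, b), t)) t₀ = L ((0, 0), 1) :=
    (hL.comp_hasDerivAt t₀ ((hasDerivAt_const t₀ (a, b)).prodMk (hasDerivAt_id t₀))).deriv
  have h_y : fderiv 𝕜 (fun y => g ((a, y), t₀)) b v = L ((0, v), 0) := by
    have h_slice : HasFDerivAt (fun y : F => ((a, y), t₀))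
        ((ContinuousLinearMap.inr 𝕜 E F).prod 0) b :=
      (hasFDerivAt_prodMk_right a b).prodMk (hasFDerivAt_const t₀ b)
    rw [show fderiv 𝕜 (fun y => g ((a, y), t₀)) b = _ from (hL.comp b h_slice).fderiv]
    rfl
  have h_split : L ((0, v), 1) = L ((0, 0), 1) + L ((0, v), 0) := by
    rw [← map_add]
    simp
  rwa [h_t, h_y, ← h_split]

theorem tangent_eq_neg_leftInverse_of_eventually_eq_zero {g : (E × F) × 𝕜 → H} {a : E}
    {b : F} {t₀ : 𝕜} (hg : DifferentiableAt 𝕜 g ((a, b), t₀)) {c : 𝕜 → F} {v : F}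
    (hc : HasDerivAt c v t₀) (hc₀ : c t₀ = b) (hzero : ∀ᶠ t in 𝓝 t₀, g ((a, c t), t) = 0)
    {Δ : F →L[𝕜] H} (hΔ : HasFDerivAt (fun y => g ((a, y), t₀)) Δ b) {Δinv : H →L[𝕜] F}
    (hinv : Function.LeftInverse Δinv Δ) :
    v = -Δinv (deriv (fun t => g ((a, b), t)) t₀) := by
  have h_tangent : deriv (fun t => g ((a, b), t)) t₀ + Δ v = 0 := by
    rw [← hΔ.fderiv]
    exact (hg.hasDerivAt_comp_graph hc hc₀).unique
      ((hasDerivAt_const t₀ 0).congr_of_eventuallyEq hzero)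
  rw [← map_neg, ← eq_neg_of_add_eq_zero_right h_tangent, hinv]

theorem reduced_function_first_derivative_general
    (m p k : ℕ)
    (g : ((Fin m → ℝ) × (Fin p → ℝ)) × ℝ → (Fin m → ℝ) × (Fin p → ℝ))
    (α : Fin m → ℝ) (β : Fin p → ℝ)
    (hg : ContDiffAt ℝ (k + 1) g ((α, β), 0))
    (Δ : (Fin p → ℝ) →L[ℝ] (Fin p → ℝ))
    (hΔ : HasFDerivAt (fun b => (g ((α, b), 0)).2) Δ β)
    (Δinv : (Fin p → ℝ) →L[ℝ] (Fin p → ℝ))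
    (hinv2 : ∀ y, Δinv (Δ y) = y)
    (ε₁ : ℝ) (hε₁ : 0 < ε₁)
    (βbar : ℝ → Fin p → ℝ)
    (hbar : ∀ ε ∈ Set.Ioo (-ε₁) ε₁, (g ((α, βbar ε), ε)).2 = 0)
    (hbar0 : βbar 0 = β)
    (hbarC : ContDiffOn ℝ (k + 1) βbar (Set.Ioo (-ε₁) ε₁))
    (γ₁ : Fin p → ℝ)
    (hγ₁ : γ₁ = -(Δinv (deriv (fun ε => (g ((α, β), ε)).2) 0))) :
    HasDerivAt (fun ε => (g ((α, βbar ε), ε)).1)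
      (deriv (fun ε => (g ((α, β), ε)).1) 0 +
        (fderiv ℝ (fun b => (g ((α, b), 0)).1) β) γ₁) 0 := by
  have hg_diff : DifferentiableAt ℝ g ((α, β), 0) := hg.differentiableAt (by simp)
  have h_nhds : Ioo (-ε₁) ε₁ ∈ 𝓝 (0 : ℝ) := Ioo_mem_nhds (neg_neg_of_pos hε₁) hε₁
  have hβbar : HasDerivAt βbar (deriv βbar 0) 0 :=
    ((hbarC.contDiffAt h_nhds).differentiableAt (by simp)).hasDerivAt
  have h_tangent : deriv βbar 0 = γ₁ := by
    rw [hγ₁]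
    exact tangent_eq_neg_leftInverse_of_eventually_eq_zero hg_diff.snd hβbar hbar0
      (eventually_of_mem h_nhds hbar) hΔ hinv2
  rw [← h_tangent]
  exact hg_diff.fst.hasDerivAt_comp_graph hβbar hbar0

/-- The reduced function `δ(α,ε) = π g(α, β̄(α,ε), ε)` satisfies
`(∂δ/∂ε)(α,0) = f₁(α) = π g₁(z_α) + (∂π g₀/∂b)(z_α) γ₁(α)` with
`γ₁(α) = -Δ_α⁻¹ π^⊥ g₁(z_α)`. -/
theorem reduced_function_first_derivative
    (m p k : ℕ) (hk : 1 ≤ k)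
    (g : ((Fin m → ℝ) × (Fin p → ℝ)) × ℝ → (Fin m → ℝ) × (Fin p → ℝ))
    (α : Fin m → ℝ) (β : Fin p → ℝ)
    (hg : ContDiffAt ℝ (k + 1) g ((α, β), 0))
    (hg0 : g ((α, β), 0) = 0)
    (Δ : (Fin p → ℝ) →L[ℝ] (Fin p → ℝ))
    (hΔ : HasFDerivAt (fun b => (g ((α, b), 0)).2) Δ β)
    (Δinv : (Fin p → ℝ) →L[ℝ] (Fin p → ℝ))
    (hinv1 : ∀ y, Δ (Δinv y) = y) (hinv2 : ∀ y, Δinv (Δ y) = y)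
    (ε₁ : ℝ) (hε₁ : 0 < ε₁)
    (βbar : ℝ → Fin p → ℝ)
    (hbar : ∀ ε ∈ Set.Ioo (-ε₁) ε₁, (g ((α, βbar ε), ε)).2 = 0)
    (hbar0 : βbar 0 = β)
    (hbarC : ContDiffOn ℝ (k + 1) βbar (Set.Ioo (-ε₁) ε₁))
    (γ₁ : Fin p → ℝ)
    (hγ₁ : γ₁ = -(Δinv (deriv (fun ε => (g ((α, β), ε)).2) 0))) :
    HasDerivAt (fun ε => (g ((α, βbar ε), ε)).1)
      (deriv (fun ε => (g ((α, β), ε)).1) 0 +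
        (fderiv ℝ (fun b => (g ((α, b), 0)).1) β) γ₁) 0 :=
  reduced_function_first_derivative_general m p k g α β hg Δ hΔ Δinv hinv2 ε₁ hε₁ βbar hbar hbar0
    hbarC γ₁ hγ₁
end

section
/- (Fundamental Lemma, first order) Let x(t,z,ε) be the solution of the T-periodic C² differential system x' = F₀(t,x) + ε F₁(t,x) + O(ε²) with x(0,z,ε) = z, and let Y(t,z) be a fundamental matrix of the variational equation y' = ∂_x F₀(t, x(t,z,0)) y. Then x(t,z,ε) = x(t,z,0) + ε y₁(t,z) + O(ε²), where y₁(t,z) = Y(t,z) ∫₀^t Y(s,z)^{-1} F₁(s, x(s,z,0)) ds. -/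
open Set intervalIntegral

/-!
Write `f = x(·,z,ε) - x(·,z,0) - ε y₁`. Variation of constants shows that `y₁` solves
`y' = ∂ₓF₀(t, x(t,z,0)) y + F₁(t, x(t,z,0))`, `y(0) = 0`, so `f' = ∂ₓF₀ f + R` where, by Taylor's
formula for `F₀` and the Lipschitz bound for `F₁` on a compact tube around the unperturbed orbit,
`‖R‖ ≤ K ‖f‖ + c ε²` as long as `‖f‖ ≤ 1`. Gronwall's inequality gives `‖f‖ = O(ε²)` on `[0, T]`;
for small `ε` this bound stays below `1`, so a first-exit argument shows that the solution never
leaves the tube.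
-/

section

variable {E : Type*} [NormedAddCommGroup E] [NormedSpace ℝ E]

theorem gronwallBound_zero_le_mul {K η x X : ℝ} (hK : 0 ≤ K) (hη : 0 ≤ η) (hxX : x ≤ X) :
    gronwallBound 0 K η x ≤ η * gronwallBound 0 K 1 X := by
  rcases hK.eq_or_lt with rfl | hK
  · simp only [gronwallBound_K0, zero_add, one_mul]
    exact mul_le_mul_of_nonneg_left hxX hη
  · simp only [gronwallBound_of_K_ne_0 hK.ne', zero_mul, zero_add]
    calc η / K * (Real.exp (K * x) - 1) ≤ η / K * (Real.exp (K * X) - 1) := by gcongr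
      _ = η * (1 / K * (Real.exp (K * X) - 1)) := by ring

theorem norm_le_gronwallBound_of_norm_deriv_right_le_of_gronwallBound_lt
    {f f' : ℝ → E} {δ K η ρ a b : ℝ}
    (hf : ContinuousOn f (Icc a b)) (hf' : ∀ t ∈ Ico a b, HasDerivWithinAt f (f' t) (Ici t) t)
    (ha : ‖f a‖ ≤ δ) (bound : ∀ t ∈ Ico a b, ‖f t‖ ≤ ρ → ‖f' t‖ ≤ K * ‖f t‖ + η)
    (hρ : ∀ t ∈ Icc a b, gronwallBound δ K η (t - a) < ρ) :
    ∀ t ∈ Icc a b, ‖f t‖ ≤ gronwallBound δ K η (t - a) := by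
  have gronwall_upto : ∀ τ ∈ Icc a b, (∀ t ∈ Ico a τ, ‖f t‖ ≤ ρ) →
      ∀ t ∈ Icc a τ, ‖f t‖ ≤ gronwallBound δ K η (t - a) := fun τ hτ hsmall =>
    norm_le_gronwallBound_of_norm_deriv_right_le (hf.mono (Icc_subset_Icc_right hτ.2))
      (fun t ht => hf' t ⟨ht.1, ht.2.trans_le hτ.2⟩) ha
      (fun t ht => bound t ⟨ht.1, ht.2.trans_le hτ.2⟩ (hsmall t ht))
  -- At the first time `τ` with `ρ ≤ ‖f τ‖`, Gronwall on `[a, τ]` would give `‖f τ‖ < ρ`.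
  have hsmall : ∀ t ∈ Icc a b, ‖f t‖ < ρ := by
    by_contra! hexit
    set S := Icc a b ∩ f ⁻¹' {v | ρ ≤ ‖v‖}
    have hSb : BddBelow S := ⟨a, fun t ht => ht.1.1⟩
    have hτ : sInf S ∈ S := (hf.preimage_isClosed_of_isClosed isClosed_Icc
      (isClosed_le continuous_const continuous_norm)).csInf_mem hexit hSb
    have hbefore : ∀ t ∈ Ico a (sInf S), ‖f t‖ ≤ ρ := fun t ht =>
      (not_le.1 fun h => notMem_of_lt_csInf ht.2 hSb
        ⟨⟨ht.1, ht.2.le.trans hτ.1.2⟩, h⟩).le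
    exact (hρ _ hτ.1).not_ge
      (hτ.2.trans (gronwall_upto _ hτ.1 hbefore _ ⟨hτ.1.1, le_rfl⟩))
  intro t ht
  exact gronwall_upto b ⟨ht.1.trans ht.2, le_rfl⟩
    (fun s hs => (hsmall s (Ico_subset_Icc_self hs)).le) t ht

theorem Convex.norm_image_sub_sub_fderiv_le
    {F : Type*} [NormedAddCommGroup F] [NormedSpace ℝ F] {f : E → F} {s : Set E} {C : ℝ} {x y : E}
    (hf : ∀ z ∈ s, DifferentiableAt ℝ f z) (hf' : ∀ z ∈ s, DifferentiableAt ℝ (fderiv ℝ f) z)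
    (bound : ∀ z ∈ s, ‖fderiv ℝ (fderiv ℝ f) z‖ ≤ C) (hs : Convex ℝ s) (hx : x ∈ s) (hy : y ∈ s) :
    ‖f y - f x - fderiv ℝ f x (y - x)‖ ≤ C * ‖y - x‖ ^ 2 := by
  have hseg : segment ℝ x y ⊆ s := hs.segment_subset hx hy
  have hC : 0 ≤ C := (norm_nonneg (fderiv ℝ (fderiv ℝ f) x)).trans (bound x hx)
  have hfx : ∀ z ∈ segment ℝ x y, ‖fderiv ℝ f z - fderiv ℝ f x‖ ≤ C * ‖y - x‖ := by
    intro z hz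
    have hzx : ‖z - x‖ ≤ ‖y - x‖ := by
      rw [← dist_eq_norm, ← dist_eq_norm, dist_comm z, dist_comm y]
      linarith [dist_add_dist_of_mem_segment hz, dist_nonneg (x := z) (y := y)]
    calc ‖fderiv ℝ f z - fderiv ℝ f x‖ ≤ C * ‖z - x‖ :=
          hs.norm_image_sub_le_of_norm_fderiv_le hf' bound hx (hseg hz)
      _ ≤ C * ‖y - x‖ := by gcongr
  calc ‖f y - f x - fderiv ℝ f x (y - x)‖ ≤ C * ‖y - x‖ * ‖y - x‖ :=
        (convex_segment x y).norm_image_sub_le_of_norm_fderiv_le' (fun z hz => hf z (hseg hz))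
          hfx (left_mem_segment ℝ x y) (right_mem_segment ℝ x y)
    _ = C * ‖y - x‖ ^ 2 := by ring

theorem IsCompact.exists_nonneg_bound_of_continuousOn {X F : Type*} [TopologicalSpace X]
    [SeminormedAddCommGroup F] {s : Set X} (hs : IsCompact s) {f : X → F} (hf : ContinuousOn f s) :
    ∃ C, 0 ≤ C ∧ ∀ x ∈ s, ‖f x‖ ≤ C :=
  let ⟨C, hC⟩ := hs.exists_bound_of_continuousOn hf
  ⟨max C 0, le_max_right _ _, fun x hx => (hC x hx).trans (le_max_left _ _)⟩

theorem continuous_of_mul_eq_one {X R : Type*} [TopologicalSpace X] [NormedRing R]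
    [HasSummableGeomSeries R] {Y Yinv : X → R} (hY : Continuous Y)
    (h₁ : ∀ t, Y t * Yinv t = 1) (h₂ : ∀ t, Yinv t * Y t = 1) : Continuous Yinv := by
  have hinv : Yinv = Ring.inverse ∘ Y :=
    funext fun t => (Ring.inverse_unit ⟨Y t, Yinv t, h₁ t, h₂ t⟩).symm
  rw [hinv, continuous_iff_continuousAt]
  exact fun t =>
    (NormedRing.inverse_continuousAt ⟨Y t, Yinv t, h₁ t, h₂ t⟩).comp (x := t) hY.continuousAt

theorem hasDerivAt_variationOfConstants [CompleteSpace E] {Y Yinv A : ℝ → E →L[ℝ] E} {g : ℝ → E}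
    (hY : ∀ t, HasDerivAt Y ((A t).comp (Y t)) t)
    (h₁ : ∀ t, Y t * Yinv t = 1) (h₂ : ∀ t, Yinv t * Y t = 1) (hg : Continuous g) (t : ℝ) :
    HasDerivAt (fun t => Y t (∫ s in (0:ℝ)..t, Yinv s (g s)))
      (A t (Y t (∫ s in (0:ℝ)..t, Yinv s (g s))) + g t) t := by
  have hYc : Continuous Y := continuous_iff_continuousAt.2 fun t => (hY t).continuousAt
  have hI := (((continuous_of_mul_eq_one hYc h₁ h₂).clm_apply hg).integral_hasStrictDerivAt
    0 t).hasDerivAt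
  convert (hY t).clm_apply hI using 1
  show _ = _ + (Y t * Yinv t) (g t)
  rw [h₁]
  rfl

theorem norm_perturbation_remainder_le {φ₀ φ₁ : E → E} {D : E →L[ℝ] E} {u v w g : E}
    {ε L C₂ L₁ B : ℝ} (hε : |ε| ≤ 1) (hC₂ : 0 ≤ C₂) (hL₁ : 0 ≤ L₁) (hw : ‖w‖ ≤ B)
    (hsmall : ‖u - v - ε • w‖ ≤ 1) (hD : ‖D‖ ≤ L)
    (htaylor : ‖φ₀ u - φ₀ v - D (u - v)‖ ≤ C₂ * ‖u - v‖ ^ 2)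
    (hlip : ‖φ₁ u - φ₁ v‖ ≤ L₁ * ‖u - v‖) :
    ‖φ₀ u + ε • φ₁ u + g - φ₀ v - ε • (D w + φ₁ v)‖ ≤
      (L + 2 * C₂ + L₁) * ‖u - v - ε • w‖ + (2 * C₂ * B ^ 2 + L₁ * B) * ε ^ 2 + ‖g‖ := by
  set f := u - v - ε • w
  have hsplit : φ₀ u + ε • φ₁ u + g - φ₀ v - ε • (D w + φ₁ v) =
      (φ₀ u - φ₀ v - D (u - v)) + D f + ε • (φ₁ u - φ₁ v) + g := by
    simp only [f, map_sub, map_smul, smul_add, smul_sub]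
    abel
  have he : ‖u - v‖ ≤ ‖f‖ + |ε| * B := by
    calc ‖u - v‖ = ‖f + ε • w‖ := by simp only [f, sub_add_cancel]
      _ ≤ ‖f‖ + |ε| * B := by
        grw [norm_add_le, norm_smul, Real.norm_eq_abs, hw]
  have hB : 0 ≤ B := (norm_nonneg w).trans hw
  have hf := norm_nonneg f
  -- `‖f‖ ≤ 1` turns the quadratic Taylor term into a linear one in `‖f‖`.
  have hsq : ‖u - v‖ ^ 2 ≤ 2 * ‖f‖ + 2 * B ^ 2 * ε ^ 2 := by
    have := abs_nonneg ε
    nlinarith [sq_abs ε, norm_nonneg (u - v), sq_nonneg (‖f‖ - |ε| * B)]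
  have hlin : |ε| * ‖u - v‖ ≤ ‖f‖ + B * ε ^ 2 := by
    have := abs_nonneg ε
    nlinarith [sq_abs ε]
  rw [hsplit]
  calc ‖(φ₀ u - φ₀ v - D (u - v)) + D f + ε • (φ₁ u - φ₁ v) + g‖
      ≤ C₂ * ‖u - v‖ ^ 2 + L * ‖f‖ + |ε| * (L₁ * ‖u - v‖) + ‖g‖ := by
        grw [norm_add_le, norm_add_le, norm_add_le, htaylor, D.le_opNorm, hD, norm_smul,
          Real.norm_eq_abs, hlip]
    _ ≤ _ := by nlinarith

theorem exists_perturbation_remainder_bound [ProperSpace E] {Φ₀ Φ₁ : ℝ × E → E}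
    (hΦ₀ : ContDiff ℝ 2 Φ₀) (hΦ₁ : ContDiff ℝ 1 Φ₁) {x₀ y : ℝ → E} (hx₀ : Continuous x₀)
    (hy : Continuous y) (T : ℝ) :
    ∃ K c : ℝ, 0 ≤ K ∧ 0 ≤ c ∧ ∀ s ∈ Icc 0 T, ∀ (u g : E) (ε : ℝ), |ε| ≤ 1 →
      ‖u - x₀ s - ε • y s‖ ≤ 1 →
      ‖Φ₀ (s, u) + ε • Φ₁ (s, u) + g - Φ₀ (s, x₀ s) -
          ε • (fderiv ℝ (fun v => Φ₀ (s, v)) (x₀ s) (y s) + Φ₁ (s, x₀ s))‖ ≤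
        K * ‖u - x₀ s - ε • y s‖ + c * ε ^ 2 + ‖g‖ := by
  obtain ⟨R, hR⟩ := (isCompact_Icc (a := 0) (b := T)).exists_bound_of_continuousOn
    hx₀.continuousOn
  obtain ⟨B, hB, hyB⟩ := (isCompact_Icc (a := 0) (b := T)).exists_nonneg_bound_of_continuousOn
    hy.continuousOn
  set S : Set (ℝ × E) := Icc 0 T ×ˢ Metric.closedBall 0 (R + 1 + B)
  have hS : IsCompact S := isCompact_Icc.prod (isCompact_closedBall _ _)
  have hSc : Convex ℝ S := (convex_Icc _ _).prod (convex_closedBall _ _)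
  obtain ⟨L, hL, hDΦ₀⟩ := hS.exists_nonneg_bound_of_continuousOn
    (hΦ₀.continuous_fderiv (by norm_num)).continuousOn
  have hΦ₀' : ContDiff ℝ 1 (fderiv ℝ Φ₀) := hΦ₀.fderiv_right (m := 1) (by norm_num)
  obtain ⟨C₂, hC₂, hD2Φ₀⟩ := hS.exists_nonneg_bound_of_continuousOn
    (hΦ₀'.continuous_fderiv (by norm_num)).continuousOn
  obtain ⟨L₁, hL₁, hDΦ₁⟩ := hS.exists_nonneg_bound_of_continuousOn
    (hΦ₁.continuous_fderiv (by norm_num)).continuousOn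
  refine ⟨L + 2 * C₂ + L₁, 2 * C₂ * B ^ 2 + L₁ * B, by positivity, by positivity,
    fun s hs u g ε hε hsmall => ?_⟩
  have hmem : ∀ v : E, ‖v - x₀ s‖ ≤ 1 + B → (s, v) ∈ S := fun v hv => ⟨hs, by
    rw [mem_closedBall_zero_iff]
    linarith [norm_le_norm_add_norm_sub' v (x₀ s), hR s hs]⟩
  have hu : (s, u) ∈ S := hmem u <| by
    calc ‖u - x₀ s‖ = ‖(u - x₀ s - ε • y s) + ε • y s‖ := by rw [sub_add_cancel]
      _ ≤ 1 + B := by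
        grw [norm_add_le, hsmall, norm_smul, Real.norm_eq_abs, hε, hyB s hs, one_mul]
  have hv : (s, x₀ s) ∈ S := hmem (x₀ s) (by rw [sub_self, norm_zero]; linarith)
  have hdist : ‖((s, u) : ℝ × E) - (s, x₀ s)‖ = ‖u - x₀ s‖ := by simp
  have hpartial : HasFDerivAt (fun v => Φ₀ (s, v))
      ((fderiv ℝ Φ₀ (s, x₀ s)).comp (ContinuousLinearMap.inr ℝ ℝ E)) (x₀ s) :=
    (hΦ₀.differentiable (by norm_num) _).hasFDerivAt.comp _ (hasFDerivAt_prodMk_right s (x₀ s))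
  refine norm_perturbation_remainder_le (φ₀ := fun v => Φ₀ (s, v)) (φ₁ := fun v => Φ₁ (s, v))
    hε hC₂ hL₁ (hyB s hs) hsmall ?_ ?_ ?_
  · rw [hpartial.fderiv]
    grw [ContinuousLinearMap.opNorm_comp_le, ContinuousLinearMap.norm_inr_le_one, mul_one]
    exact hDΦ₀ _ hv
  · have := hSc.norm_image_sub_sub_fderiv_le (fun z _ => hΦ₀.differentiable (by norm_num) z)
      (fun z _ => hΦ₀'.differentiable one_ne_zero z) hD2Φ₀ hv hu
    simpa [hpartial.fderiv] using this
  · simpa [hdist] using hSc.norm_image_sub_le_of_norm_fderiv_le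
      (fun z _ => hΦ₁.differentiable one_ne_zero z) hDΦ₁ hv hu

theorem exists_norm_sub_sub_smul_le_sq [ProperSpace E] {Φ₀ Φ₁ : ℝ × E → E}
    (hΦ₀ : ContDiff ℝ 2 Φ₀) (hΦ₁ : ContDiff ℝ 1 Φ₁) {G : ℝ → E → ℝ → E} {CG : ℝ}
    (hG : ∀ t u ε, ‖G t u ε‖ ≤ CG * ε ^ 2) {x : ℝ → ℝ → E} (hx0 : ∀ ε, x ε 0 = x 0 0)
    (hx : ∀ ε t, HasDerivAt (x ε) (Φ₀ (t, x ε t) + ε • Φ₁ (t, x ε t) + G t (x ε t) ε) t)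
    {y : ℝ → E} (hy0 : y 0 = 0)
    (hy : ∀ t, HasDerivAt y (fderiv ℝ (fun v => Φ₀ (t, v)) (x 0 t) (y t) + Φ₁ (t, x 0 t)) t)
    {T : ℝ} (hT : 0 ≤ T) :
    ∃ C > 0, ∃ ε₀ > 0, ∀ ε, |ε| ≤ ε₀ → ∀ t ∈ Icc 0 T, ‖x ε t - x 0 t - ε • y t‖ ≤ C * ε ^ 2 := by
  have hCG : 0 ≤ CG := (norm_nonneg _).trans ((hG 0 0 1).trans_eq (by ring))
  have hx₀ : ∀ t, HasDerivAt (x 0) (Φ₀ (t, x 0 t)) t := fun t => by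
    simpa [norm_le_zero_iff.1 ((hG t (x 0 t) 0).trans_eq (by ring))] using hx 0 t
  obtain ⟨K, c, hK, hc, hrem⟩ := exists_perturbation_remainder_bound hΦ₀ hΦ₁
    (continuous_iff_continuousAt.2 fun t => (hx₀ t).continuousAt)
    (continuous_iff_continuousAt.2 fun t => (hy t).continuousAt) T
  set Γ := gronwallBound 0 K 1 T
  have hΓ : 0 ≤ Γ := by simpa [gronwallBound_x0] using gronwallBound_zero_le_mul hK zero_le_one hT
  set C := (c + CG) * Γ + 1
  have hC : 1 ≤ C := by simp only [C]; nlinarith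
  refine ⟨C, by linarith, C⁻¹, by positivity, fun ε hε t ht => ?_⟩
  have hε1 : |ε| ≤ 1 := hε.trans (inv_le_one_of_one_le₀ hC)
  have hgron : ∀ s ∈ Icc 0 T, gronwallBound 0 K ((c + CG) * ε ^ 2) (s - 0) ≤ (C - 1) * ε ^ 2 :=
    fun s hs => (gronwallBound_zero_le_mul (x := s - 0) (X := T) hK (by positivity)
      (by linarith [hs.2])).trans_eq (by simp only [C]; ring)
  -- With `ε₀ = C⁻¹` the Gronwall bound stays below the tube radius `1`.
  have hsmall : (C - 1) * ε ^ 2 < 1 := by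
    have hεC : |ε| * C ≤ 1 := by rwa [← le_div_iff₀ (by linarith), one_div]
    nlinarith [sq_abs ε, abs_nonneg ε]
  have hf : ∀ s, HasDerivAt (fun s => x ε s - x 0 s - ε • y s)
      (Φ₀ (s, x ε s) + ε • Φ₁ (s, x ε s) + G s (x ε s) ε - Φ₀ (s, x 0 s) -
        ε • (fderiv ℝ (fun v => Φ₀ (s, v)) (x 0 s) (y s) + Φ₁ (s, x 0 s))) s :=
    fun s => ((hx ε s).sub (hx₀ s)).sub ((hy s).const_smul ε)
  calc ‖x ε t - x 0 t - ε • y t‖ ≤ gronwallBound 0 K ((c + CG) * ε ^ 2) (t - 0) :=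
        norm_le_gronwallBound_of_norm_deriv_right_le_of_gronwallBound_lt (ρ := 1)
          (continuous_iff_continuousAt.2 fun s => (hf s).continuousAt).continuousOn
          (fun s _ => (hf s).hasDerivWithinAt) (by simp [hx0, hy0])
          (fun s hs hs1 => (hrem s (Ico_subset_Icc_self hs) _ _ ε hε1 hs1).trans
            (by nlinarith [hG s (x ε s) ε]))
          (fun s hs => (hgron s hs).trans_lt hsmall) t ht
    _ ≤ (C - 1) * ε ^ 2 := hgron t ht
    _ ≤ C * ε ^ 2 := by nlinarith [sq_nonneg ε]

end

theorem fundamental_lemma_first_order_general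
    (n : ℕ) (T : ℝ) (hT : 0 < T)
    (D : Set (Fin n → ℝ))
    (F₀ F₁ : ℝ → (Fin n → ℝ) → (Fin n → ℝ))
    (hF₀ : ContDiff ℝ 2 (fun q : ℝ × (Fin n → ℝ) => F₀ q.1 q.2))
    (hF₁ : ContDiff ℝ 2 (fun q : ℝ × (Fin n → ℝ) => F₁ q.1 q.2))
    (G : ℝ → (Fin n → ℝ) → ℝ → (Fin n → ℝ)) (CG : ℝ)
    (hG : ∀ t x ε, ‖G t x ε‖ ≤ CG * ε ^ 2)
    (x : ℝ → (Fin n → ℝ) → ℝ → (Fin n → ℝ))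
    (hx0 : ∀ z ε, x 0 z ε = z)
    (hxde : ∀ z ε t, HasDerivAt (fun s => x s z ε)
      (F₀ t (x t z ε) + ε • F₁ t (x t z ε) + G t (x t z ε) ε) t) :
    ∀ z ∈ D, ∀ Y Yinv : ℝ → (Fin n → ℝ) →L[ℝ] (Fin n → ℝ),
      (∀ t, HasDerivAt Y ((fderiv ℝ (fun u => F₀ t u) (x t z 0)).comp (Y t)) t) →
      (∀ t, (Y t).comp (Yinv t) = ContinuousLinearMap.id ℝ (Fin n → ℝ) ∧
            (Yinv t).comp (Y t) = ContinuousLinearMap.id ℝ (Fin n → ℝ)) →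
      ∃ C > (0:ℝ), ∃ ε₂ > (0:ℝ), ∀ ε : ℝ, |ε| ≤ ε₂ → ∀ t ∈ Set.Icc 0 T,
        ‖x t z ε - x t z 0 -
            ε • (Y t) (∫ s in (0:ℝ)..t, (Yinv s) (F₁ s (x s z 0)))‖ ≤ C * ε ^ 2 := by
  intro z _ Y Yinv hY hYinv
  have hx₀ : Continuous fun t => x t z 0 :=
    continuous_iff_continuousAt.2 fun t => (hxde z 0 t).continuousAt
  exact exists_norm_sub_sub_smul_le_sq hF₀ (hF₁.of_le (by norm_num)) hG
    (x := fun ε t => x t z ε) (fun ε => by simp only [hx0]) (hxde z) (by simp)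
    (hasDerivAt_variationOfConstants hY (fun t => (hYinv t).1) (fun t => (hYinv t).2)
      (hF₁.continuous.comp (continuous_id.prodMk hx₀))) hT.le

/-- Fundamental Lemma to first order: the solution of
`x' = F₀(t,x) + ε F₁(t,x) + O(ε²)`, `x(0,z,ε) = z`, satisfies
`x(t,z,ε) = x(t,z,0) + ε y₁(t,z) + O(ε²)` with
`y₁(t,z) = Y(t,z) ∫₀ᵗ Y(s,z)⁻¹ F₁(s, x(s,z,0)) ds`, where `Y(·,z)` is a
fundamental matrix of the variational equation along `x(·,z,0)`. -/
theorem fundamental_lemma_first_order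
    (n : ℕ) (T : ℝ) (hT : 0 < T)
    (D : Set (Fin n → ℝ)) (hD : IsOpen D) (hDb : Bornology.IsBounded D)
    (F₀ F₁ : ℝ → (Fin n → ℝ) → (Fin n → ℝ))
    (hF₀ : ContDiff ℝ 2 (fun q : ℝ × (Fin n → ℝ) => F₀ q.1 q.2))
    (hF₁ : ContDiff ℝ 2 (fun q : ℝ × (Fin n → ℝ) => F₁ q.1 q.2))
    (hF₀p : ∀ t x, F₀ (t + T) x = F₀ t x)
    (hF₁p : ∀ t x, F₁ (t + T) x = F₁ t x)
    (G : ℝ → (Fin n → ℝ) → ℝ → (Fin n → ℝ)) (CG : ℝ)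
    (hGc : Continuous (fun q : ℝ × (Fin n → ℝ) × ℝ => G q.1 q.2.1 q.2.2))
    (hG : ∀ t x ε, ‖G t x ε‖ ≤ CG * ε ^ 2)
    (x : ℝ → (Fin n → ℝ) → ℝ → (Fin n → ℝ))
    (hx0 : ∀ z ε, x 0 z ε = z)
    (hxde : ∀ z ε t, HasDerivAt (fun s => x s z ε)
      (F₀ t (x t z ε) + ε • F₁ t (x t z ε) + G t (x t z ε) ε) t)
    (hxsm : ∀ t z, ContDiff ℝ 2 (fun ε => x t z ε)) :
    ∀ z ∈ D, ∀ Y Yinv : ℝ → (Fin n → ℝ) →L[ℝ] (Fin n → ℝ),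
      (∀ t, HasDerivAt Y ((fderiv ℝ (fun u => F₀ t u) (x t z 0)).comp (Y t)) t) →
      (∀ t, (Y t).comp (Yinv t) = ContinuousLinearMap.id ℝ (Fin n → ℝ) ∧
            (Yinv t).comp (Y t) = ContinuousLinearMap.id ℝ (Fin n → ℝ)) →
      ∃ C > (0:ℝ), ∃ ε₂ > (0:ℝ), ∀ ε : ℝ, |ε| ≤ ε₂ → ∀ t ∈ Set.Icc 0 T,
        ‖x t z ε - x t z 0 -
            ε • (Y t) (∫ s in (0:ℝ)..t, (Yinv s) (F₁ s (x s z 0)))‖ ≤ C * ε ^ 2 :=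
  fundamental_lemma_first_order_general n T hT D F₀ F₁ hF₀ hF₁ G CG hG x hx0 hxde
end

section
/- Let x(t,z,ε) be the solution of the T-periodic system \eqref{s1} with x(0,z,ε) = z and let Y(t,z) be a fundamental matrix of the variational equation along x(t,z,0). Define g(z,ε) = Y(T,z)^{-1}(x(T,z,ε) - z). Then the zero-order term g₀(z) = Y(T,z)^{-1}(x(T,z,0) - z) satisfies (∂g₀/∂z)(z) = Y(0,z)^{-1} - Y(T,z)^{-1} at every z for which the solution x(·,z,0) is T-periodic. -/
/-!
By the product rule, `Dg₀(z) = DY(T,z)⁻¹ · (x(T,z,0) - z) + Y(T,z)⁻¹ ∘ (∂x/∂z(T,z,0) - I)`.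
On the periodic manifold `x(T,z,0) - z = 0`, so the first term vanishes, and substituting
`∂x/∂z(T,z,0) = Y(T,z) Y(0,z)⁻¹` into the second gives `Y(0,z)⁻¹ - Y(T,z)⁻¹`.
-/

open ContinuousLinearMap

theorem DifferentiableAt.hasFDerivAt_clm_apply_of_eq_zero {𝕜 E F G : Type*}
    [NontriviallyNormedField 𝕜] [NormedAddCommGroup E] [NormedSpace 𝕜 E]
    [NormedAddCommGroup F] [NormedSpace 𝕜 F] [NormedAddCommGroup G] [NormedSpace 𝕜 G]
    {A : E → F →L[𝕜] G} {u : E → F} {u' : E →L[𝕜] F} {z : E}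
    (hA : DifferentiableAt 𝕜 A z) (hu : HasFDerivAt u u' z) (hu0 : u z = 0) :
    HasFDerivAt (fun y => A y (u y)) ((A z).comp u') z :=
  (hA.hasFDerivAt.clm_apply hu).congr_fderiv (by simp [hu0])

theorem ContinuousLinearMap.comp_comp_sub_id_of_comp_eq_id {R E : Type*} [Ring R]
    [TopologicalSpace E] [AddCommGroup E] [IsTopologicalAddGroup E] [Module R E]
    {L M : E →L[R] E} (h : L.comp M = ContinuousLinearMap.id R E) (N : E →L[R] E) :
    L.comp (M.comp N - ContinuousLinearMap.id R E) = N - L := by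
  rw [comp_sub, ← comp_assoc, h, id_comp, comp_id]

theorem derivative_of_g0_on_periodic_manifold_general
    (n : ℕ) (T : ℝ)
    (x : ℝ → (Fin n → ℝ) → (Fin n → ℝ))
    (Y Yinv : (Fin n → ℝ) → ℝ → (Fin n → ℝ) →L[ℝ] (Fin n → ℝ))
    (hYinv : ∀ z t, (Y z t).comp (Yinv z t) = ContinuousLinearMap.id ℝ (Fin n → ℝ) ∧
      (Yinv z t).comp (Y z t) = ContinuousLinearMap.id ℝ (Fin n → ℝ))
    (g₀ : (Fin n → ℝ) → (Fin n → ℝ))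
    (hg₀ : ∀ z, g₀ z = (Yinv z T) (x T z - z))
    (zb : Fin n → ℝ) (hper : x T zb = zb)
    (hflow : HasFDerivAt (fun z => x T z) ((Y zb T).comp (Yinv zb 0)) zb)
    (hYd : DifferentiableAt ℝ (fun z => Yinv z T) zb) :
    HasFDerivAt g₀ (Yinv zb 0 - Yinv zb T) zb := by
  have hdisplacement : HasFDerivAt (fun z => x T z - z)
      ((Y zb T).comp (Yinv zb 0) - ContinuousLinearMap.id ℝ (Fin n → ℝ)) zb :=
    hflow.sub (hasFDerivAt_id zb)
  rw [show g₀ = fun z => Yinv z T (x T z - z) from funext hg₀,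
    ← comp_comp_sub_id_of_comp_eq_id (hYinv zb T).2 (Yinv zb 0)]
  exact hYd.hasFDerivAt_clm_apply_of_eq_zero hdisplacement (sub_eq_zero.2 hper)

/-- The function `g₀(z) = Y(T,z)⁻¹ (x(T,z,0) - z)` satisfies
`(∂g₀/∂z)(z) = Y(0,z)⁻¹ - Y(T,z)⁻¹` at every point `z` where the unperturbed
solution is `T`-periodic, using `(∂x/∂z)(T,z,0) = Y(T,z) Y(0,z)⁻¹`. -/
theorem derivative_of_g0_on_periodic_manifold
    (n : ℕ) (T : ℝ) (hT : 0 < T)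
    (F₀ : ℝ → (Fin n → ℝ) → (Fin n → ℝ))
    (x : ℝ → (Fin n → ℝ) → (Fin n → ℝ))
    (hx0 : ∀ z, x 0 z = z)
    (hxde : ∀ z t, HasDerivAt (fun s => x s z) (F₀ t (x t z)) t)
    (Y Yinv : (Fin n → ℝ) → ℝ → (Fin n → ℝ) →L[ℝ] (Fin n → ℝ))
    (hYinv : ∀ z t, (Y z t).comp (Yinv z t) = ContinuousLinearMap.id ℝ (Fin n → ℝ) ∧
      (Yinv z t).comp (Y z t) = ContinuousLinearMap.id ℝ (Fin n → ℝ))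
    (g₀ : (Fin n → ℝ) → (Fin n → ℝ))
    (hg₀ : ∀ z, g₀ z = (Yinv z T) (x T z - z))
    (zb : Fin n → ℝ) (hper : x T zb = zb)
    (hflow : HasFDerivAt (fun z => x T z) ((Y zb T).comp (Yinv zb 0)) zb)
    (hYd : DifferentiableAt ℝ (fun z => Yinv z T) zb) :
    HasFDerivAt g₀ (Yinv zb 0 - Yinv zb T) zb :=
  derivative_of_g0_on_periodic_manifold_general n T x Y Yinv hYinv g₀ hg₀ zb hper hflow hYd
end
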